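/- Let m₁, m₂, ν₁, ν₂ > 0 satisfy m₁ − m₂ > ν₂ − ν₁, m₁/ν₁ ≥ m₂/ν₂, m₁ − m₂ + 2ν₁ > 0, and ν₂ > m₁. Then for all u > 0 and 0 < w < 1, A₂ · π₂(u) · φ(w) ≤ h(u,w) ≤ A₁ · π₁(u) · φ(w), where h(u,w) = K₀ · u^{(m₁+m₂)/2−1} · w^{m₁/2−1} · (1−w)^{m₂/2−1} · (1 + m₁uw/ν₁)^{−(m₁+ν₁)/2} · (1 + m₂u(1−w)/ν₂)^{−(m₂+ν₂)/2}. (This is the sub-independence property of U = Y₁+Y₂ and W = Y₁/(Y₁+Y₂) for independent F-distributed Y₁, Y₂.) -/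

import Mathlib

open Real MeasureTheory Set

/-- Beta function `B(a,b) = Γ(a)Γ(b)/Γ(a+b)`. -/
noncomputable def Beta (a b : ℝ) : ℝ := Gamma a * Gamma b / Gamma (a + b)

/-- The normalizing constant `K₀`. -/
noncomputable def K₀ (m₁ m₂ ν₁ ν₂ : ℝ) : ℝ :=
  (m₁ / ν₁) ^ (m₁ / 2) * (m₂ / ν₂) ^ (m₂ / 2) /
    (Beta (m₁ / 2) (ν₁ / 2) * Beta (m₂ / 2) (ν₂ / 2))

/-- The joint density `h(u,w)` of `(U,W)` on `u > 0`, `0 < w < 1`. -/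
noncomputable def hDens (m₁ m₂ ν₁ ν₂ : ℝ) (u w : ℝ) : ℝ :=
  K₀ m₁ m₂ ν₁ ν₂ * u ^ ((m₁ + m₂) / 2 - 1) * w ^ (m₁ / 2 - 1) * (1 - w) ^ (m₂ / 2 - 1) *
    (1 + m₁ * u * w / ν₁) ^ (-(m₁ + ν₁) / 2) *
    (1 + m₂ * u * (1 - w) / ν₂) ^ (-(m₂ + ν₂) / 2)

/-- The Beta density `φ(w)` with shape parameters `m₁/2`, `m₂/2`. -/
noncomputable def phi (m₁ m₂ : ℝ) (w : ℝ) : ℝ :=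
  w ^ (m₁ / 2 - 1) * (1 - w) ^ (m₂ / 2 - 1) / Beta (m₁ / 2) (m₂ / 2)

/-- The density `π₁(u)`. -/
noncomputable def pi₁ (m₁ m₂ ν₂ : ℝ) (u : ℝ) : ℝ :=
  (m₂ / ν₂) ^ ((m₁ + m₂) / 2) * u ^ ((m₁ + m₂) / 2 - 1) *
    (1 + m₂ * u / ν₂) ^ (-(m₂ + ν₂) / 2) / Beta ((m₁ + m₂) / 2) ((ν₂ - m₁) / 2)

/-- The density `π₂(u)`. -/
noncomputable def pi₂ (m₁ m₂ ν₁ : ℝ) (u : ℝ) : ℝ :=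
  (m₁ / (2 * ν₁)) ^ ((m₁ + m₂) / 2) * u ^ ((m₁ + m₂) / 2 - 1) *
    (1 + m₁ * u / (2 * ν₁)) ^ (-(m₁ + ν₁)) / Beta ((m₁ + m₂) / 2) ((m₁ - m₂ + 2 * ν₁) / 2)

/-- The constant `A₁`. -/
noncomputable def A₁ (m₁ m₂ ν₁ ν₂ : ℝ) : ℝ :=
  (m₁ * ν₂ / (m₂ * ν₁)) ^ (m₁ / 2) * Beta ((m₁ + m₂) / 2) ((ν₂ - m₁) / 2) *
    Beta (m₁ / 2) (m₂ / 2) / (Beta (m₁ / 2) (ν₁ / 2) * Beta (m₂ / 2) (ν₂ / 2))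

/-- The constant `A₂`. -/
noncomputable def A₂ (m₁ m₂ ν₁ ν₂ : ℝ) : ℝ :=
  2 ^ ((m₁ + m₂) / 2) * (m₂ * ν₁ / (m₁ * ν₂)) ^ (m₂ / 2) *
    Beta ((m₁ + m₂) / 2) ((m₁ - m₂ + 2 * ν₁) / 2) *
    Beta (m₁ / 2) (m₂ / 2) / (Beta (m₁ / 2) (ν₁ / 2) * Beta (m₂ / 2) (ν₂ / 2))

/-!
Both bounds replace the two decaying factors of `h` by a single one. Since
`m₂/ν₂ ≤ m₁/ν₁` and `m₂ + ν₂ ≤ m₁ + ν₁`, lowering the exponent of the first factor to that of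
the second and using `(1 + x)(1 + y) ≥ 1 + x + y` gives the upper bound. For the lower bound,
raise the second factor to the exponent and scale of the first one and apply AM–GM,
`(1 + x)(1 + y) ≤ (1 + (x + y)/2)²`. What remains is that `Aᵢ πᵢ(u) φ(w)` is exactly `h(u,w)`
with the two factors replaced by that single one: the Beta functions `B((m₁+m₂)/2, ·)` and
`B(m₁/2, m₂/2)` cancel and the powers of `m₁/ν₁`, `m₂/ν₂` recombine into `K₀`.
-/

theorem Beta_pos {a b : ℝ} (ha : 0 < a) (hb : 0 < b) : 0 < Beta a b :=
  div_pos (mul_pos (Gamma_pos_of_pos ha) (Gamma_pos_of_pos hb)) (Gamma_pos_of_pos (add_pos ha hb))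

theorem one_add_rpow_neg_mul_le {x y z p q : ℝ} (hx : 0 ≤ x) (hy : 0 ≤ y) (hz : 0 ≤ z)
    (hzxy : z ≤ x + y) (hq : 0 ≤ q) (hqp : q ≤ p) :
    (1 + x) ^ (-p / 2) * (1 + y) ^ (-q / 2) ≤ (1 + z) ^ (-q / 2) :=
  calc (1 + x) ^ (-p / 2) * (1 + y) ^ (-q / 2)
      ≤ (1 + x) ^ (-q / 2) * (1 + y) ^ (-q / 2) := by
        gcongr
        linarith
    _ = ((1 + x) * (1 + y)) ^ (-q / 2) := (mul_rpow (by positivity) (by positivity)).symm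
    _ ≤ (1 + z) ^ (-q / 2) :=
        rpow_le_rpow_of_nonpos (by positivity) (by nlinarith) (by linarith)

theorem le_one_add_rpow_neg_mul {x y y' z p q : ℝ} (hx : 0 ≤ x) (hy : 0 ≤ y) (hyy' : y ≤ y')
    (hz : x + y' = 2 * z) (hq : 0 ≤ q) (hqp : q ≤ p) :
    (1 + z) ^ (-p) ≤ (1 + x) ^ (-p / 2) * (1 + y) ^ (-q / 2) :=
  calc (1 + z) ^ (-p) = ((1 + z) * (1 + z)) ^ (-p / 2) := by
        rw [mul_rpow (by linarith) (by linarith), ← rpow_add (by linarith)]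
        ring_nf
    _ ≤ ((1 + x) * (1 + y')) ^ (-p / 2) :=
        rpow_le_rpow_of_nonpos (mul_pos (by linarith) (by linarith))
          (by nlinarith [sq_nonneg (x - y')])
          (by linarith)
    _ = (1 + x) ^ (-p / 2) * (1 + y') ^ (-p / 2) := mul_rpow (by linarith) (by linarith)
    _ ≤ (1 + x) ^ (-p / 2) * (1 + y) ^ (-q / 2) := by
        gcongr (1 + x) ^ (-p / 2) * ?_
        calc (1 + y') ^ (-p / 2) ≤ (1 + y) ^ (-p / 2) :=
              rpow_le_rpow_of_nonpos (by linarith) (by linarith) (by linarith)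
          _ ≤ (1 + y) ^ (-q / 2) := by
              gcongr
              linarith

theorem div_rpow_mul_rpow_add {a b : ℝ} (ha : 0 ≤ a) (hb : 0 < b) (s t : ℝ) :
    (a / b) ^ s * b ^ (s + t) = a ^ s * b ^ t := by
  rw [div_rpow ha hb.le, rpow_add hb]
  field_simp

noncomputable def hDensPrefactor (m₁ m₂ ν₁ ν₂ u w : ℝ) : ℝ :=
  K₀ m₁ m₂ ν₁ ν₂ * u ^ ((m₁ + m₂) / 2 - 1) * w ^ (m₁ / 2 - 1) * (1 - w) ^ (m₂ / 2 - 1)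

section

variable {m₁ m₂ ν₁ ν₂ u w : ℝ}

theorem hDens_eq_hDensPrefactor_mul :
    hDens m₁ m₂ ν₁ ν₂ u w = hDensPrefactor m₁ m₂ ν₁ ν₂ u w *
      ((1 + m₁ * u * w / ν₁) ^ (-(m₁ + ν₁) / 2) *
        (1 + m₂ * u * (1 - w) / ν₂) ^ (-(m₂ + ν₂) / 2)) := by
  unfold hDens hDensPrefactor
  ring

theorem hDensPrefactor_nonneg (hm₁ : 0 < m₁) (hm₂ : 0 < m₂) (hν₁ : 0 < ν₁) (hν₂ : 0 < ν₂)
    (hu : 0 < u) (hw0 : 0 < w) (hw1 : w < 1) : 0 ≤ hDensPrefactor m₁ m₂ ν₁ ν₂ u w := by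
  have : 0 < 1 - w := by linarith
  have := Beta_pos (half_pos hm₁) (half_pos hν₁)
  have := Beta_pos (half_pos hm₂) (half_pos hν₂)
  unfold hDensPrefactor K₀
  positivity

theorem A₁_mul_pi₁_mul_phi (hm₁ : 0 < m₁) (hm₂ : 0 < m₂) (hν₁ : 0 < ν₁) (hν₂ : 0 < ν₂)
    (h4 : m₁ < ν₂) :
    A₁ m₁ m₂ ν₁ ν₂ * pi₁ m₁ m₂ ν₂ u * phi m₁ m₂ w =
      hDensPrefactor m₁ m₂ ν₁ ν₂ u w * (1 + m₂ * u / ν₂) ^ (-(m₂ + ν₂) / 2) := by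
  have hB := (Beta_pos (by linarith : 0 < (m₁ + m₂) / 2) (by linarith : 0 < (ν₂ - m₁) / 2)).ne'
  have hB' := (Beta_pos (half_pos hm₁) (half_pos hm₂)).ne'
  have hpow : (m₁ * ν₂ / (m₂ * ν₁)) ^ (m₁ / 2) * (m₂ / ν₂) ^ ((m₁ + m₂) / 2) =
      (m₁ / ν₁) ^ (m₁ / 2) * (m₂ / ν₂) ^ (m₂ / 2) := by
    rw [show m₁ * ν₂ / (m₂ * ν₁) = (m₁ / ν₁) / (m₂ / ν₂) by field_simp, add_div,
      div_rpow_mul_rpow_add (by positivity) (by positivity)]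
  unfold A₁ pi₁ phi hDensPrefactor K₀
  rw [← hpow]
  field_simp

theorem A₂_mul_pi₂_mul_phi (hm₁ : 0 < m₁) (hm₂ : 0 < m₂) (hν₁ : 0 < ν₁) (hν₂ : 0 < ν₂)
    (h3 : 0 < m₁ - m₂ + 2 * ν₁) :
    A₂ m₁ m₂ ν₁ ν₂ * pi₂ m₁ m₂ ν₁ u * phi m₁ m₂ w =
      hDensPrefactor m₁ m₂ ν₁ ν₂ u w * (1 + m₁ * u / (2 * ν₁)) ^ (-(m₁ + ν₁)) := by
  have hB := (Beta_pos (by linarith : 0 < (m₁ + m₂) / 2) (half_pos h3)).ne'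
  have hB' := (Beta_pos (half_pos hm₁) (half_pos hm₂)).ne'
  have hpow : 2 ^ ((m₁ + m₂) / 2) * (m₂ * ν₁ / (m₁ * ν₂)) ^ (m₂ / 2) *
      (m₁ / (2 * ν₁)) ^ ((m₁ + m₂) / 2) = (m₁ / ν₁) ^ (m₁ / 2) * (m₂ / ν₂) ^ (m₂ / 2) := by
    rw [mul_right_comm, ← mul_rpow zero_le_two (by positivity),
      show 2 * (m₁ / (2 * ν₁)) = m₁ / ν₁ by field_simp,
      show m₂ * ν₁ / (m₁ * ν₂) = (m₂ / ν₂) / (m₁ / ν₁) by field_simp,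
      show (m₁ + m₂) / 2 = m₂ / 2 + m₁ / 2 by ring, mul_comm,
      div_rpow_mul_rpow_add (by positivity) (by positivity), mul_comm]
  unfold A₂ pi₂ phi hDensPrefactor K₀
  rw [← hpow]
  field_simp

end

/-- Sub-independence of `U = Y₁+Y₂` and `W = Y₁/(Y₁+Y₂)`: the joint density `h(u,w)`
is bracketed as `A₂ π₂(u) φ(w) ≤ h(u,w) ≤ A₁ π₁(u) φ(w)`. -/
theorem subIndependence_bounds
    (m₁ m₂ ν₁ ν₂ : ℝ) (hm₁ : 0 < m₁) (hm₂ : 0 < m₂) (hν₁ : 0 < ν₁) (hν₂ : 0 < ν₂)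
    (h1 : ν₂ - ν₁ < m₁ - m₂) (h2 : m₂ / ν₂ ≤ m₁ / ν₁)
    (h3 : 0 < m₁ - m₂ + 2 * ν₁) (h4 : m₁ < ν₂)
    (u w : ℝ) (hu : 0 < u) (hw0 : 0 < w) (hw1 : w < 1) :
    A₂ m₁ m₂ ν₁ ν₂ * pi₂ m₁ m₂ ν₁ u * phi m₁ m₂ w ≤ hDens m₁ m₂ ν₁ ν₂ u w ∧
      hDens m₁ m₂ ν₁ ν₂ u w ≤ A₁ m₁ m₂ ν₁ ν₂ * pi₁ m₁ m₂ ν₂ u * phi m₁ m₂ w := by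
  have hratio (t : ℝ) (ht : 0 ≤ t) : m₂ * u * t / ν₂ ≤ m₁ * u * t / ν₁ :=
    calc m₂ * u * t / ν₂ = m₂ / ν₂ * (u * t) := by ring
      _ ≤ m₁ / ν₁ * (u * t) := by gcongr
      _ = m₁ * u * t / ν₁ := by ring
  have hqp : m₂ + ν₂ ≤ m₁ + ν₁ := by linarith
  have hw1' : 0 ≤ 1 - w := by linarith
  rw [hDens_eq_hDensPrefactor_mul, A₂_mul_pi₂_mul_phi hm₁ hm₂ hν₁ hν₂ h3,
    A₁_mul_pi₁_mul_phi hm₁ hm₂ hν₁ hν₂ h4]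
  constructor
  · refine mul_le_mul_of_nonneg_left ?_ (hDensPrefactor_nonneg hm₁ hm₂ hν₁ hν₂ hu hw0 hw1)
    refine le_one_add_rpow_neg_mul (by positivity) (by positivity) (hratio (1 - w) hw1') ?_
      (by linarith) hqp
    field_simp
    ring
  · refine mul_le_mul_of_nonneg_left ?_ (hDensPrefactor_nonneg hm₁ hm₂ hν₁ hν₂ hu hw0 hw1)
    refine one_add_rpow_neg_mul_le (by positivity) (by positivity) (by positivity) ?_
      (by linarith) hqp
    have hsplit : m₂ * u / ν₂ = m₂ * u * w / ν₂ + m₂ * u * (1 - w) / ν₂ := by ring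
    linarith [hratio w hw0.le]
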